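/- Let g₂(z) = (4/3)(1 − 16z² + 16z⁴) and g₃(z) = −(8/27)(1 − 8z²)(1 − 16z² − 8z⁴). For every z ∈ (0,1/4), the quartic polynomial X⁴ − 2g₂(z)X² + 8g₃(z)X − g₂(z)²/3 has exactly one positive real root R(z). Moreover, for every x ∈ (0,1/2), R(φ(x)) = 2(2x²−2x−1)²/(4x+1)³, where φ(x) = √(x(x+1)³/(4x+1)³). -/
import Mathlib


open MeasureTheory Filter Topology

noncomputable section

/-- The explicit invariant `g₂ = (4/3)(1 - 16z² + 16z⁴)`. -/
def g2R (z : ℝ) : ℝ := (4/3) * (1 - 16*z^2 + 16*z^4)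
/-- The explicit invariant `g₃ = -(8/27)(1 - 8z²)(1 - 16z² - 8z⁴)`. -/
def g3R (z : ℝ) : ℝ := -(8/27) * (1 - 8*z^2) * (1 - 16*z^2 - 8*z^4)

/-- The map `φ(x) = √(x(x+1)³/(4x+1)³)`, a diffeomorphism from `(0,1/2)` onto `(0,1/4)`. -/
def phi (x : ℝ) : ℝ := Real.sqrt (x * (x+1)^3 / (4*x+1)^3)

/-- Uniqueness of the positive root of `X⁴ - 2aX² + 8bX - a²/3`, for any reals a, b. -/
lemma pos_root_unique (a b R₁ R₂ : ℝ) (h1 : 0 < R₁) (h2 : 0 < R₂)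
    (e1 : R₁^4 - 2*a*R₁^2 + 8*b*R₁ - a^2/3 = 0)
    (e2 : R₂^4 - 2*a*R₂^2 + 8*b*R₂ - a^2/3 = 0) : R₁ = R₂ := by
  by_contra hne
  have hd : (R₁ - R₂) ≠ 0 := sub_ne_zero.mpr hne
  have hB : 0 < R₁*R₂*(R₁-R₂)^2 + 3*(R₁*R₂ - a/3)^2 := by
    have : 0 < R₁*R₂*(R₁-R₂)^2 := by positivity
    nlinarith [sq_nonneg (R₁*R₂ - a/3)]
  have key : (R₁ - R₂) * (R₁*R₂*(R₁-R₂)^2 + 3*(R₁*R₂ - a/3)^2) = 0 := by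
    linear_combination R₂ * e1 - R₁ * e2
  rcases mul_eq_zero.mp key with h | h
  · exact hd h
  · exact absurd h (ne_of_gt hB)


/-- For every `z ∈ (0,1/4)`, the quartic `X⁴ - 2g₂X² + 8g₃X - g₂²/3` has exactly one
positive real root `R(z)`, and `R(φ(x)) = 2(2x²-2x-1)²/(4x+1)³` for `x ∈ (0,1/2)`. -/
theorem R_unique_and_at_phi :
    (∀ z ∈ Set.Ioo (0:ℝ) (1/4), ∃! R : ℝ, 0 < R ∧
      R^4 - 2 * g2R z * R^2 + 8 * g3R z * R - (g2R z)^2 / 3 = 0) ∧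
    (∀ x ∈ Set.Ioo (0:ℝ) (1/2), ∀ R : ℝ, 0 < R →
      R^4 - 2 * g2R (phi x) * R^2 + 8 * g3R (phi x) * R - (g2R (phi x))^2 / 3 = 0 →
      R = 2 * (2*x^2 - 2*x - 1)^2 / (4*x+1)^3) := by
  constructor
  · rintro z ⟨hz0, hz4⟩
    set f : ℝ → ℝ := fun R => R^4 - 2 * g2R z * R^2 + 8 * g3R z * R - (g2R z)^2 / 3 with hf
    have hzsq : z^2 < 1/16 := by nlinarith
    have hz4' : z^4 ≤ z^2/16 := by nlinarith [sq_nonneg z, pow_pos hz0 2]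
    have hzpos : 0 < z^2 := pow_pos hz0 2
    have hz4pos : 0 < z^4 := pow_pos hz0 4
    have hg2 : 0 < g2R z := by
      unfold g2R; nlinarith
    have hg2' : g2R z ≤ 4/3 := by
      unfold g2R; nlinarith
    have hg3 : |g3R z| ≤ 1 := by
      unfold g3R; rw [abs_le]; constructor <;> nlinarith
    have hf0 : f 0 < 0 := by
      simp only [hf]; norm_num
      positivity
    have hf10 : 0 < f 10 := by
      simp only [hf]
      have := abs_le.mp hg3
      nlinarith [hg2, hg2', this.1, this.2]
    have hcont : ContinuousOn f (Set.Icc 0 10) := by fun_prop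
    obtain ⟨R, hR, hfR⟩ := intermediate_value_Ioo (by norm_num : (0:ℝ) ≤ 10) hcont ⟨hf0, hf10⟩
    refine ⟨R, ⟨hR.1, hfR⟩, ?_⟩
    rintro R' ⟨hR', hfR'⟩
    exact pos_root_unique (g2R z) (g3R z) R' R hR' hR.1 hfR' hfR
  · rintro x ⟨hx0, hx2⟩ R hR hfR
    have h4 : (0:ℝ) < 4*x + 1 := by linarith
    have hz2 : (phi x)^2 = x * (x+1)^3 / (4*x+1)^3 := by
      unfold phi
      rw [Real.sq_sqrt]
      positivity
    set R₀ : ℝ := 2 * (2*x^2 - 2*x - 1)^2 / (4*x+1)^3 with hR₀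
    have hR₀pos : 0 < R₀ := by
      have h5 : 2*x^2 - 2*x - 1 < 0 := by nlinarith
      have h6 : 0 < (2*x^2 - 2*x - 1)^2 := by nlinarith
      exact div_pos (by linarith) (by positivity)
    have hroot : R₀^4 - 2 * g2R (phi x) * R₀^2 + 8 * g3R (phi x) * R₀ - (g2R (phi x))^2 / 3 = 0 := by
      have h4' : (4*x+1) ≠ 0 := ne_of_gt h4
      unfold g2R g3R
      have hz4 : (phi x)^4 = (x * (x+1)^3 / (4*x+1)^3)^2 := by
        rw [show (phi x)^4 = ((phi x)^2)^2 by ring, hz2]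
      rw [hz4, hz2, hR₀]
      field_simp
      ring
    exact pos_root_unique (g2R (phi x)) (g3R (phi x)) R R₀ hR hR₀pos hfR hroot
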